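/- In the 2-normed space ℝ² with 2-norm ‖(a₁,a₂),(b₁,b₂)‖ = |a₁b₂ − a₂b₁|, the sequence xₖ = (√k, √k) is statistically quasi-Cauchy, but its image under f(x₁,x₂) = (x₁², x₂²), namely (k, k), is not statistically quasi-Cauchy. Hence statistical sequential continuity does not imply statistical ward continuity. -/

import Mathlib

/-!
The consecutive differences of `(√k, √k)` are `(d, d)` with `d = √(k+1) - √k → 0`, so the
sequence is quasi-Cauchy for the 2-norm, and a quasi-Cauchy sequence is statistically
quasi-Cauchy because only finitely many indices violate any given `ε`. The differences of
`(k, k)` are all `(1, 1)`, whose 2-norm against `z = (0, 1)` is `1`, so every index violates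
`ε = 1`.
-/

open Filter

/-- A 2-normed space: a real linear space with dim > 1 together with a 2-norm. -/
structure TwoNormedSpace (X : Type*) [AddCommGroup X] [Module ℝ X] : Type _ where
  toFun : X → X → ℝ
  one_lt_rank : 1 < Module.rank ℝ X
  eq_zero_iff : ∀ x y : X, toFun x y = 0 ↔ ¬ LinearIndependent ℝ ![x, y]
  symm : ∀ x y : X, toFun x y = toFun y x
  smul_left : ∀ (α : ℝ) (x y : X), toFun (α • x) y = |α| * toFun x y
  add_right : ∀ x y z : X, toFun x (y + z) ≤ toFun x y + toFun x z

variable {X : Type*} [AddCommGroup X] [Module ℝ X]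

/-- A sequence is statistically quasi-Cauchy w.r.t. a 2-norm `N`. -/
def StatQuasiCauchy (N : X → X → ℝ) (x : ℕ → X) : Prop :=
  ∀ ε > (0:ℝ), ∀ z : X, Tendsto
    (fun n => (((Finset.range n).filter (fun k => ε ≤ N (x (k+1) - x k) z)).card : ℝ) / n)
    atTop (nhds 0)

/-- A sequence statistically converges to `L` w.r.t. a 2-norm `N`. -/
def StatConv (N : X → X → ℝ) (x : ℕ → X) (L : X) : Prop :=
  ∀ ε > (0:ℝ), ∀ z : X, Tendsto
    (fun n => (((Finset.range n).filter (fun k => ε ≤ N (x k - L) z)).card : ℝ) / n)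
    atTop (nhds 0)

/-- A sequence converges to `L` w.r.t. a 2-norm `N`. -/
def ConvTo (N : X → X → ℝ) (x : ℕ → X) (L : X) : Prop :=
  ∀ z : X, Tendsto (fun n => N (x n - L) z) atTop (nhds 0)

/-- A sequence is quasi-Cauchy w.r.t. a 2-norm `N`. -/
def QuasiCauchy (N : X → X → ℝ) (x : ℕ → X) : Prop :=
  ∀ z : X, Tendsto (fun n => N (x (n+1) - x n) z) atTop (nhds 0)

/-- A subset `E` is statistically ward compact w.r.t. a 2-norm `N`. -/
def StatWardCompact (N : X → X → ℝ) (E : Set X) : Prop :=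
  ∀ x : ℕ → X, (∀ n, x n ∈ E) → ∃ φ : ℕ → ℕ, StrictMono φ ∧ StatQuasiCauchy N (x ∘ φ)

/-- `f` is statistically ward continuous on `E` w.r.t. a 2-norm `N`. -/
def StatWardContinuousOn (N : X → X → ℝ) (f : X → X) (E : Set X) : Prop :=
  ∀ x : ℕ → X, (∀ n, x n ∈ E) → StatQuasiCauchy N x → StatQuasiCauchy N (fun n => f (x n))

/-- The standard 2-norm on `ℝ²`: the area of the parallelogram spanned by `a` and `b`. -/
def N2 : ℝ × ℝ → ℝ × ℝ → ℝ := fun a b => |a.1 * b.2 - a.2 * b.1|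

open Topology Finset

theorem tendsto_card_filter_range_div_of_eventually_not {p : ℕ → Prop} [DecidablePred p]
    (h : ∀ᶠ k in atTop, ¬ p k) :
    Tendsto (fun n : ℕ => ((#{k ∈ range n | p k} : ℕ) : ℝ) / n) atTop (𝓝 0) := by
  obtain ⟨K, hK⟩ := eventually_atTop.mp h
  have hsub (n : ℕ) : {k ∈ range n | p k} ⊆ range K := fun k hk =>
    mem_range.mpr <| by_contra fun hKk => hK k (not_lt.mp hKk) (mem_filter.mp hk).2
  refine squeeze_zero (fun n => by positivity) (fun n => ?_)
    (tendsto_const_div_atTop_nhds_zero_nat (K : ℝ))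
  refine div_le_div_of_nonneg_right ?_ n.cast_nonneg
  simpa using card_le_card (hsub n)

theorem tendsto_card_filter_range_div_of_forall {p : ℕ → Prop} [DecidablePred p]
    (h : ∀ k, p k) :
    Tendsto (fun n : ℕ => ((#{k ∈ range n | p k} : ℕ) : ℝ) / n) atTop (𝓝 1) := by
  refine tendsto_const_nhds.congr' ?_
  filter_upwards [eventually_ge_atTop 1] with n hn
  rw [filter_true_of_mem fun k _ => h k, card_range,
    div_self (Nat.cast_ne_zero.mpr (by omega))]

section TwoNorm

variable {G : Type*} [AddCommGroup G] {N : G → G → ℝ} {x : ℕ → G}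

theorem QuasiCauchy.statQuasiCauchy (h : QuasiCauchy N x) : StatQuasiCauchy N x :=
  fun _ hε z => tendsto_card_filter_range_div_of_eventually_not <|
    ((h z).eventually (gt_mem_nhds hε)).mono fun _ => not_le.mpr

theorem not_statQuasiCauchy_of_forall_le {ε : ℝ} (hε : 0 < ε) (z : G)
    (h : ∀ k, ε ≤ N (x (k + 1) - x k) z) : ¬ StatQuasiCauchy N x := fun hx =>
  one_ne_zero <| tendsto_nhds_unique (tendsto_card_filter_range_div_of_forall h) (hx ε hε z)

end TwoNorm

theorem N2_diag (s : ℝ) (z : ℝ × ℝ) : N2 (s, s) z = |s| * |z.2 - z.1| := by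
  rw [N2, ← abs_mul, mul_sub]

theorem quasiCauchy_N2_diag {x : ℕ → ℝ} (hx : Tendsto (fun k => x (k + 1) - x k) atTop (𝓝 0)) :
    QuasiCauchy N2 (fun k => (x k, x k)) := fun z => by
  simp only [Prod.mk_sub_mk, N2_diag]
  simpa using hx.abs.mul_const |z.2 - z.1|

theorem tendsto_sqrt_add_one_sub_sqrt :
    Tendsto (fun t : ℝ => √(t + 1) - √t) atTop (𝓝 0) := by
  have hinv : Tendsto (fun t : ℝ => (√(t + 1))⁻¹) atTop (𝓝 0) :=
    (Real.tendsto_sqrt_atTop.comp (tendsto_atTop_add_const_right _ 1 tendsto_id)).inv_tendsto_atTop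
  refine squeeze_zero'
    (Eventually.of_forall fun t => sub_nonneg.mpr (Real.sqrt_le_sqrt (by linarith))) ?_ hinv
  filter_upwards [eventually_ge_atTop 0] with t ht
  have hpos : 0 < √(t + 1) := Real.sqrt_pos.mpr (by linarith)
  rw [← one_div, le_div_iff₀ hpos]
  -- `(√(t+1) - √t) √(t+1) ≤ (√(t+1) - √t)(√(t+1) + √t) = 1`
  nlinarith [Real.sq_sqrt (by linarith : (0 : ℝ) ≤ t + 1), Real.sq_sqrt ht, Real.sqrt_nonneg t,
    Real.sqrt_le_sqrt (by linarith : t ≤ t + 1)]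

theorem stmt16 :
    StatQuasiCauchy N2 (fun k => (Real.sqrt k, Real.sqrt k)) ∧
    ¬ StatQuasiCauchy N2 (fun k => ((k : ℝ), (k : ℝ))) := by
  have hsqrt : Tendsto (fun k : ℕ => √((k + 1 : ℕ) : ℝ) - √(k : ℝ)) atTop (𝓝 0) := by
    simpa only [Nat.cast_succ, Function.comp_def] using
      tendsto_sqrt_add_one_sub_sqrt.comp tendsto_natCast_atTop_atTop
  have hlin (k : ℕ) :
      1 ≤ N2 ((((k + 1 : ℕ) : ℝ), ((k + 1 : ℕ) : ℝ)) - ((k : ℝ), (k : ℝ))) (0, 1) := by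
    simp [N2]
  exact ⟨(quasiCauchy_N2_diag hsqrt).statQuasiCauchy,
    not_statQuasiCauchy_of_forall_le one_pos (0, 1) hlin⟩
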